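/- Let π = μ + ν be a bivector on N with TN = Hor ⊕ Vert as above, μ horizontal and ν vertical. If α is a horizontal 1-form (annihilating Vert) and β, γ are vertical 1-forms (annihilating Hor), and if the Lie bracket of a vertical vector field with the vector field X̄ = μ♯α is vertical, then −(1/2)[π,π](α,β,γ) = (L_{X̄} ν)(β,γ). -/

import Mathlib

/-! Statement 15: coordinate model of `N = ℝʰ × ℝᵛ` with splitting
`TN = Hor ⊕ Vert` determined by a connection `Γ` (`Hor` spanned by
`h_i = ∂ₓᵢ + ∑ₐ Γᵢₐ ∂ᵧₐ`, `Vert` by the `∂ᵧₐ`).  Let `π = μ + ν` with `μ`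
horizontal and `ν` vertical.  If `α` is a horizontal 1-form (annihilating
`Vert`), `β, γ` are vertical 1-forms (annihilating `Hor`), and the Lie bracket
of any vertical vector field with `X̄ = μ♯α = π♯α` is vertical, then
`−(1/2)[π,π](α,β,γ) = (L_{X̄} ν)(β,γ)`. -/

abbrev TotSp (h v : ℕ) := ((Fin h → ℝ) × (Fin v → ℝ))

def coordVec (h v : ℕ) : Fin h ⊕ Fin v → TotSp h v :=
  Sum.elim (fun i => (Pi.single i 1, 0)) (fun a => (0, Pi.single a 1))

noncomputable def pdP (h v : ℕ) (f : TotSp h v → ℝ) (A : Fin h ⊕ Fin v) (x : TotSp h v) : ℝ :=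
  fderiv ℝ f x (coordVec h v A)

noncomputable def schoutenP (h v : ℕ) (L : Fin h ⊕ Fin v → Fin h ⊕ Fin v → TotSp h v → ℝ)
    (A B C : Fin h ⊕ Fin v) (x : TotSp h v) : ℝ :=
  2 * ∑ l, (L l A x * pdP h v (L B C) l x + L l B x * pdP h v (L C A) l x
      + L l C x * pdP h v (L A B) l x)

def horFrame (h v : ℕ) (Γ : Fin h → Fin v → TotSp h v → ℝ) (i : Fin h)
    (A : Fin h ⊕ Fin v) (x : TotSp h v) : ℝ :=
  match A with
  | Sum.inl i' => if i' = i then 1 else 0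
  | Sum.inr a => Γ i a x

def horBiv (h v : ℕ) (Γ : Fin h → Fin v → TotSp h v → ℝ)
    (m : Fin h → Fin h → TotSp h v → ℝ)
    (A B : Fin h ⊕ Fin v) (x : TotSp h v) : ℝ :=
  ∑ i, ∑ j, m i j x * horFrame h v Γ i A x * horFrame h v Γ j B x

def vertBiv (h v : ℕ) (nc : Fin v → Fin v → TotSp h v → ℝ)
    (A B : Fin h ⊕ Fin v) (x : TotSp h v) : ℝ :=
  match A, B with
  | Sum.inr a, Sum.inr b => nc a b x
  | _, _ => 0

/-- Lie bracket of vector fields on the total space (components). -/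
noncomputable def lieVF (h v : ℕ) (X Y : Fin h ⊕ Fin v → TotSp h v → ℝ)
    (A : Fin h ⊕ Fin v) (x : TotSp h v) : ℝ :=
  ∑ C, (X C x * pdP h v (Y A) C x - Y C x * pdP h v (X A) C x)

/-- Lie derivative of a bivector `P` along a vector field `X`:
`(L_X P)^{AB} = ∑_C (X^C ∂_C P^{AB} − P^{CB} ∂_C X^A − P^{AC} ∂_C X^B)`. -/
noncomputable def lieBiv (h v : ℕ) (X : Fin h ⊕ Fin v → TotSp h v → ℝ)
    (P : Fin h ⊕ Fin v → Fin h ⊕ Fin v → TotSp h v → ℝ)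
    (A B : Fin h ⊕ Fin v) (x : TotSp h v) : ℝ :=
  ∑ C, (X C x * pdP h v (P A B) C x - P C B x * pdP h v (X A) C x
      - P A C x * pdP h v (X B) C x)

section helpers
variable {h v : ℕ}

lemma pdP_congr {f g : TotSp h v → ℝ} (hfg : ∀ y, f y = g y) (A : Fin h ⊕ Fin v) (x : TotSp h v) :
    pdP h v f A x = pdP h v g A x := by
  have : f = g := funext hfg
  rw [this]

lemma pdP_zero (A : Fin h ⊕ Fin v) (x : TotSp h v) :
    pdP h v (fun _ => (0:ℝ)) A x = 0 := by
  simp [pdP, fderiv_const]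

lemma pdP_neg {f : TotSp h v → ℝ} (A : Fin h ⊕ Fin v) (x : TotSp h v) :
    pdP h v (fun y => -(f y)) A x = -pdP h v f A x := by
  simp [pdP, fderiv_neg]

lemma pdP_add {f g : TotSp h v → ℝ} {x : TotSp h v} (hf : DifferentiableAt ℝ f x)
    (hg : DifferentiableAt ℝ g x) (A : Fin h ⊕ Fin v) :
    pdP h v (fun y => f y + g y) A x = pdP h v f A x + pdP h v g A x := by
  simp [pdP, fderiv_fun_add hf hg]

lemma pdP_mul {f g : TotSp h v → ℝ} {x : TotSp h v} (hf : DifferentiableAt ℝ f x)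
    (hg : DifferentiableAt ℝ g x) (A : Fin h ⊕ Fin v) :
    pdP h v (fun y => f y * g y) A x = f x * pdP h v g A x + g x * pdP h v f A x := by
  simp [pdP, fderiv_fun_mul hf hg]

lemma pdP_mul3 {f g k : TotSp h v → ℝ} {x : TotSp h v} (hf : DifferentiableAt ℝ f x)
    (hg : DifferentiableAt ℝ g x) (hk : DifferentiableAt ℝ k x) (A : Fin h ⊕ Fin v) :
    pdP h v (fun y => f y * g y * k y) A x
      = pdP h v f A x * g x * k x + f x * pdP h v g A x * k x + f x * g x * pdP h v k A x := by
  rw [pdP_mul (f := fun y => f y * g y) (hf.mul hg) hk, pdP_mul hf hg]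
  ring

lemma pdP_sum {ι : Type*} {x : TotSp h v} (s : Finset ι) (f : ι → TotSp h v → ℝ)
    (hf : ∀ i ∈ s, DifferentiableAt ℝ (f i) x) (A : Fin h ⊕ Fin v) :
    pdP h v (fun y => ∑ i ∈ s, f i y) A x = ∑ i ∈ s, pdP h v (f i) A x := by
  simp [pdP, fderiv_fun_sum hf]

end helpers

section sums
variable {ι : Type*} [Fintype ι]

lemma sum_rot3 {ι₁ ι₂ ι₃ : Type*} [Fintype ι₁] [Fintype ι₂] [Fintype ι₃] (F : ι₁ → ι₂ → ι₃ → ℝ) :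
    ∑ a, ∑ b, ∑ c, F a b c = ∑ b, ∑ c, ∑ a, F a b c := by
  rw [Finset.sum_comm]
  exact Finset.sum_congr rfl fun b _ => Finset.sum_comm

lemma sum4_swap {κ : Type*} [Fintype κ] (F : ι → ι → ι → κ → ℝ) :
    ∑ a, ∑ b, ∑ c, ∑ l, F a b c l = ∑ l, ∑ a, ∑ b, ∑ c, F a b c l := by
  calc ∑ a, ∑ b, ∑ c, ∑ l, F a b c l
      = ∑ a, ∑ b, ∑ l, ∑ c, F a b c l :=
        Finset.sum_congr rfl fun a _ => Finset.sum_congr rfl fun b _ => Finset.sum_comm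
    _ = ∑ a, ∑ l, ∑ b, ∑ c, F a b c l :=
        Finset.sum_congr rfl fun a _ => Finset.sum_comm
    _ = ∑ l, ∑ a, ∑ b, ∑ c, F a b c l := Finset.sum_comm

lemma fact1 (f : ι → ℝ) (g : ι → ι → ℝ) (p q r : ι → ℝ) :
    ∑ A, ∑ B, ∑ C, f A * g B C * p A * q B * r C
      = (∑ A, f A * p A) * (∑ B, ∑ C, g B C * q B * r C) := by
  rw [Finset.sum_mul]
  refine Finset.sum_congr rfl fun A _ => ?_
  rw [Finset.mul_sum]
  refine Finset.sum_congr rfl fun B _ => ?_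
  rw [Finset.mul_sum]
  exact Finset.sum_congr rfl fun C _ => by ring

lemma fact2 (f : ι → ℝ) (g : ι → ι → ℝ) (p q r : ι → ℝ) :
    ∑ A, ∑ B, ∑ C, f B * g C A * p A * q B * r C
      = (∑ B, f B * q B) * (∑ C, ∑ A, g C A * r C * p A) := by
  rw [sum_rot3]
  rw [Finset.sum_mul]
  refine Finset.sum_congr rfl fun B _ => ?_
  rw [Finset.mul_sum]
  refine Finset.sum_congr rfl fun C _ => ?_
  rw [Finset.mul_sum]
  exact Finset.sum_congr rfl fun A _ => by ring

lemma fact3 (f : ι → ℝ) (g : ι → ι → ℝ) (p q r : ι → ℝ) :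
    ∑ A, ∑ B, ∑ C, f C * g A B * p A * q B * r C
      = (∑ C, f C * r C) * (∑ A, ∑ B, g A B * p A * q B) := by
  rw [sum_rot3, sum_rot3]
  rw [Finset.sum_mul]
  refine Finset.sum_congr rfl fun C _ => ?_
  rw [Finset.mul_sum]
  refine Finset.sum_congr rfl fun A _ => ?_
  rw [Finset.mul_sum]
  exact Finset.sum_congr rfl fun B _ => by ring

end sums

section splitzero
variable {h v : ℕ}

lemma sum_split_zero (f g : (Fin h ⊕ Fin v) → ℝ) (h1 : ∀ i, g (Sum.inl i) = 0)
    (h2 : ∀ a, f (Sum.inr a) = 0) : ∑ A, f A * g A = 0 := by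
  rw [Fintype.sum_sum_type]
  simp [h1, h2]

end splitzero
section smooth
variable {h v : ℕ} (Γ : Fin h → Fin v → TotSp h v → ℝ) (m : Fin h → Fin h → TotSp h v → ℝ)
  (nc : Fin v → Fin v → TotSp h v → ℝ)

lemma horFrame_smooth (hΓ : ∀ i a, ContDiff ℝ (⊤ : ℕ∞) (Γ i a)) (i : Fin h) (A : Fin h ⊕ Fin v) :
    ContDiff ℝ (⊤ : ℕ∞) (horFrame h v Γ i A) := by
  cases A with
  | inl i' => exact contDiff_const
  | inr a => exact hΓ i a

lemma horBiv_smooth (hΓ : ∀ i a, ContDiff ℝ (⊤ : ℕ∞) (Γ i a)) (hm : ∀ i j, ContDiff ℝ (⊤ : ℕ∞) (m i j))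
    (A B : Fin h ⊕ Fin v) : ContDiff ℝ (⊤ : ℕ∞) (horBiv h v Γ m A B) := by
  show ContDiff ℝ (⊤ : ℕ∞) fun x => ∑ i, ∑ j, m i j x * horFrame h v Γ i A x * horFrame h v Γ j B x
  refine ContDiff.sum fun i _ => ContDiff.sum fun j _ => ?_
  exact ((hm i j).mul (horFrame_smooth Γ hΓ i A)).mul (horFrame_smooth Γ hΓ j B)

lemma vertBiv_smooth (hnc : ∀ a b, ContDiff ℝ (⊤ : ℕ∞) (nc a b)) (A B : Fin h ⊕ Fin v) :
    ContDiff ℝ (⊤ : ℕ∞) (vertBiv h v nc A B) := by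
  cases A with
  | inl i => cases B <;> exact contDiff_const
  | inr a => cases B with
    | inl j => exact contDiff_const
    | inr b => exact hnc a b

lemma vertBiv_inl_left (B : Fin h ⊕ Fin v) (i : Fin h) (x : TotSp h v) :
    vertBiv h v nc (Sum.inl i) B x = 0 := by cases B <;> rfl

lemma vertBiv_inl_right (A : Fin h ⊕ Fin v) (i : Fin h) (x : TotSp h v) :
    vertBiv h v nc A (Sum.inl i) x = 0 := by cases A <;> rfl

lemma vertBiv_skew (hncskew : ∀ a b x, nc a b x = - nc b a x) (A B : Fin h ⊕ Fin v)
    (x : TotSp h v) : vertBiv h v nc A B x = - vertBiv h v nc B A x := by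
  cases A <;> cases B <;> simp only [vertBiv, neg_zero]
  exact hncskew _ _ _

lemma horBiv_skew (hmskew : ∀ i j x, m i j x = - m j i x) (A B : Fin h ⊕ Fin v)
    (x : TotSp h v) : horBiv h v Γ m A B x = - horBiv h v Γ m B A x := by
  unfold horBiv
  calc ∑ i, ∑ j, m i j x * horFrame h v Γ i A x * horFrame h v Γ j B x
      = ∑ i, ∑ j, -(m j i x * horFrame h v Γ j B x * horFrame h v Γ i A x) :=
        Finset.sum_congr rfl fun i _ => Finset.sum_congr rfl fun j _ => by
          rw [hmskew i j x]; ring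
    _ = -∑ i, ∑ j, m j i x * horFrame h v Γ j B x * horFrame h v Γ i A x := by
        simp only [Finset.sum_neg_distrib]
    _ = -∑ j, ∑ i, m j i x * horFrame h v Γ j B x * horFrame h v Γ i A x := by
        rw [Finset.sum_comm]

-- contraction of horFrame with a vertical 1-form
lemma frame_contract (β : Fin h ⊕ Fin v → TotSp h v → ℝ)
    (hβver : ∀ (i : Fin h) (x : TotSp h v),
      β (Sum.inl i) x = -∑ a, β (Sum.inr a) x * Γ i a x) (i : Fin h) (x : TotSp h v) :
    ∑ B, horFrame h v Γ i B x * β B x = 0 := by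
  rw [Fintype.sum_sum_type]
  have h1 : ∑ i' : Fin h, horFrame h v Γ i (Sum.inl i') x * β (Sum.inl i') x
      = β (Sum.inl i) x := by
    simp only [horFrame, ite_mul, one_mul, zero_mul]
    rw [Finset.sum_ite_eq' Finset.univ i (fun i' => β (Sum.inl i') x)]
    simp
  rw [h1, hβver i x]
  have h2 : ∑ a, horFrame h v Γ i (Sum.inr a) x * β (Sum.inr a) x
      = ∑ a, β (Sum.inr a) x * Γ i a x :=
    Finset.sum_congr rfl fun a _ => by simp [horFrame]; ring
  rw [h2]; ring

lemma horBiv_contract_left (β : Fin h ⊕ Fin v → TotSp h v → ℝ)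
    (hβver : ∀ (i : Fin h) (x : TotSp h v),
      β (Sum.inl i) x = -∑ a, β (Sum.inr a) x * Γ i a x) (C : Fin h ⊕ Fin v) (x : TotSp h v) :
    ∑ B, horBiv h v Γ m B C x * β B x = 0 := by
  unfold horBiv
  calc ∑ B, (∑ i, ∑ j, m i j x * horFrame h v Γ i B x * horFrame h v Γ j C x) * β B x
      = ∑ B, ∑ i, ∑ j, m i j x * horFrame h v Γ j C x * (horFrame h v Γ i B x * β B x) := by
        refine Finset.sum_congr rfl fun B _ => ?_
        rw [Finset.sum_mul]
        refine Finset.sum_congr rfl fun i _ => ?_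
        rw [Finset.sum_mul]
        exact Finset.sum_congr rfl fun j _ => by ring
    _ = ∑ i, ∑ j, ∑ B, m i j x * horFrame h v Γ j C x * (horFrame h v Γ i B x * β B x) := by
        rw [sum_rot3]
    _ = 0 := by
        refine Finset.sum_eq_zero fun i _ => Finset.sum_eq_zero fun j _ => ?_
        rw [← Finset.mul_sum, frame_contract Γ β hβver i x, mul_zero]

lemma horBiv_contract_right (hmskew : ∀ i j x, m i j x = - m j i x) (γ : Fin h ⊕ Fin v → TotSp h v → ℝ)
    (hγver : ∀ (i : Fin h) (x : TotSp h v),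
      γ (Sum.inl i) x = -∑ a, γ (Sum.inr a) x * Γ i a x) (B : Fin h ⊕ Fin v) (x : TotSp h v) :
    ∑ C, horBiv h v Γ m B C x * γ C x = 0 := by
  calc ∑ C, horBiv h v Γ m B C x * γ C x
      = ∑ C, -(horBiv h v Γ m C B x * γ C x) :=
        Finset.sum_congr rfl fun C _ => by rw [horBiv_skew Γ m hmskew]; ring
    _ = -∑ C, horBiv h v Γ m C B x * γ C x := by simp
    _ = 0 := by rw [horBiv_contract_left Γ m γ hγver B x]; ring

end smooth
section sep
variable {ι : Type*} [Fintype ι]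
lemma sep2 (F G : ι → ℝ) : ∑ A, ∑ B, F A * G B = (∑ A, F A) * (∑ B, G B) := by
  rw [Finset.sum_mul_sum]
end sep

theorem statement15 (h v : ℕ)
    (Γ : Fin h → Fin v → TotSp h v → ℝ) (hΓ : ∀ i a, ContDiff ℝ (⊤ : ℕ∞) (Γ i a))
    (m : Fin h → Fin h → TotSp h v → ℝ) (hm : ∀ i j, ContDiff ℝ (⊤ : ℕ∞) (m i j))
    (hmskew : ∀ i j x, m i j x = - m j i x)
    (nc : Fin v → Fin v → TotSp h v → ℝ) (hnc : ∀ a b, ContDiff ℝ (⊤ : ℕ∞) (nc a b))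
    (hncskew : ∀ a b x, nc a b x = - nc b a x)
    -- π = μ + ν :
    (π : Fin h ⊕ Fin v → Fin h ⊕ Fin v → TotSp h v → ℝ)
    (hπ : ∀ A B x, π A B x = horBiv h v Γ m A B x + vertBiv h v nc A B x)
    -- α horizontal (annihilates Vert), smooth:
    (α : Fin h ⊕ Fin v → TotSp h v → ℝ) (hαsm : ∀ A, ContDiff ℝ (⊤ : ℕ∞) (α A))
    (hαhor : ∀ (a : Fin v) (x : TotSp h v), α (Sum.inr a) x = 0)
    -- β, γ vertical (annihilate Hor), smooth:
    (β γ : Fin h ⊕ Fin v → TotSp h v → ℝ)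
    (hβsm : ∀ A, ContDiff ℝ (⊤ : ℕ∞) (β A)) (hγsm : ∀ A, ContDiff ℝ (⊤ : ℕ∞) (γ A))
    (hβver : ∀ (i : Fin h) (x : TotSp h v),
      β (Sum.inl i) x = -∑ a, β (Sum.inr a) x * Γ i a x)
    (hγver : ∀ (i : Fin h) (x : TotSp h v),
      γ (Sum.inl i) x = -∑ a, γ (Sum.inr a) x * Γ i a x)
    -- X̄ = μ♯α = π♯α :
    (X : Fin h ⊕ Fin v → TotSp h v → ℝ)
    (hX : ∀ B x, X B x = ∑ A, π A B x * α A x)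
    -- the Lie bracket of any vertical vector field with X̄ is vertical:
    (hbr : ∀ (V : Fin h ⊕ Fin v → TotSp h v → ℝ), (∀ A, ContDiff ℝ (⊤ : ℕ∞) (V A)) →
      (∀ (i : Fin h) (x : TotSp h v), V (Sum.inl i) x = 0) →
      ∀ (i : Fin h) (x : TotSp h v), lieVF h v V X (Sum.inl i) x = 0) :
    ∀ x : TotSp h v,
      -(1/2) * (∑ A, ∑ B, ∑ C, schoutenP h v π A B C x * α A x * β B x * γ C x)
        = ∑ A, ∑ B, lieBiv h v X (vertBiv h v nc) A B x * β A x * γ B x := by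
  intro x
  -- ## smoothness and differentiability
  have hμsm : ∀ A B, ContDiff ℝ (⊤ : ℕ∞) (horBiv h v Γ m A B) := horBiv_smooth Γ m hΓ hm
  have hνsm : ∀ A B, ContDiff ℝ (⊤ : ℕ∞) (vertBiv h v nc A B) := vertBiv_smooth nc hnc
  have hπf : ∀ A B, π A B = fun y => horBiv h v Γ m A B y + vertBiv h v nc A B y :=
    fun A B => funext (hπ A B)
  have hπsm : ∀ A B, ContDiff ℝ (⊤ : ℕ∞) (π A B) := fun A B => by
    rw [hπf A B]; exact (hμsm A B).add (hνsm A B)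
  have dπ : ∀ A B (y : TotSp h v), DifferentiableAt ℝ (π A B) y :=
    fun A B y => ((hπsm A B).differentiable (by simp)).differentiableAt
  have dμ : ∀ A B (y : TotSp h v), DifferentiableAt ℝ (horBiv h v Γ m A B) y :=
    fun A B y => ((hμsm A B).differentiable (by simp)).differentiableAt
  have dν : ∀ A B (y : TotSp h v), DifferentiableAt ℝ (vertBiv h v nc A B) y :=
    fun A B y => ((hνsm A B).differentiable (by simp)).differentiableAt
  have dα : ∀ A (y : TotSp h v), DifferentiableAt ℝ (α A) y :=
    fun A y => ((hαsm A).differentiable (by simp)).differentiableAt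
  have dβ : ∀ A (y : TotSp h v), DifferentiableAt ℝ (β A) y :=
    fun A y => ((hβsm A).differentiable (by simp)).differentiableAt
  have dγ : ∀ A (y : TotSp h v), DifferentiableAt ℝ (γ A) y :=
    fun A y => ((hγsm A).differentiable (by simp)).differentiableAt
  have hXf : ∀ B, X B = fun y => ∑ A, π A B y * α A y := fun B => funext (hX B)
  have hXsm : ∀ B, ContDiff ℝ (⊤ : ℕ∞) (X B) := fun B => by
    rw [hXf B]; exact ContDiff.sum fun A _ => (hπsm A B).mul (hαsm A)
  have dX : ∀ B (y : TotSp h v), DifferentiableAt ℝ (X B) y :=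
    fun B y => ((hXsm B).differentiable (by simp)).differentiableAt
  -- ## skew symmetry of π
  have hskew : ∀ A B (y : TotSp h v), π A B y = -π B A y := fun A B y => by
    rw [hπ A B y, hπ B A y, horBiv_skew Γ m hmskew A B y, vertBiv_skew nc hncskew A B y]; ring
  -- ## pointwise contraction identities
  have Hβ : ∀ C (y : TotSp h v), ∑ B, horBiv h v Γ m B C y * β B y = 0 :=
    fun C y => horBiv_contract_left Γ m β hβver C y
  have Hγ : ∀ C (y : TotSp h v), ∑ B, horBiv h v Γ m B C y * γ B y = 0 :=
    fun C y => horBiv_contract_left Γ m γ hγver C y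
  have Hγr : ∀ B (y : TotSp h v), ∑ C, horBiv h v Γ m B C y * γ C y = 0 :=
    fun B y => horBiv_contract_right Γ m hmskew γ hγver B y
  -- π contracted with α  (on the second slot) is -X
  have F2 : ∀ C (y : TotSp h v), ∑ A, π C A y * α A y = -X C y := by
    intro C y
    calc ∑ A, π C A y * α A y = ∑ A, -(π A C y * α A y) :=
          Finset.sum_congr rfl fun A _ => by rw [hskew C A y]; ring
      _ = -∑ A, π A C y * α A y := Finset.sum_neg_distrib _
      _ = -X C y := by rw [hX C y]
  -- π contracted with β (first slot) is purely vertical, and vanishes on Hor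
  have Yx_vert : ∀ l (y : TotSp h v),
      ∑ B, π B l y * β B y = ∑ B, vertBiv h v nc B l y * β B y := by
    intro l y
    calc ∑ B, π B l y * β B y
        = ∑ B, (horBiv h v Γ m B l y * β B y + vertBiv h v nc B l y * β B y) :=
          Finset.sum_congr rfl fun B _ => by rw [hπ B l y]; ring
      _ = (∑ B, horBiv h v Γ m B l y * β B y) + ∑ B, vertBiv h v nc B l y * β B y :=
          Finset.sum_add_distrib
      _ = ∑ B, vertBiv h v nc B l y * β B y := by rw [Hβ l y]; ring
  have Zx_vert : ∀ l (y : TotSp h v),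
      ∑ B, π B l y * γ B y = ∑ B, vertBiv h v nc B l y * γ B y := by
    intro l y
    calc ∑ B, π B l y * γ B y
        = ∑ B, (horBiv h v Γ m B l y * γ B y + vertBiv h v nc B l y * γ B y) :=
          Finset.sum_congr rfl fun B _ => by rw [hπ B l y]; ring
      _ = (∑ B, horBiv h v Γ m B l y * γ B y) + ∑ B, vertBiv h v nc B l y * γ B y :=
          Finset.sum_add_distrib
      _ = ∑ B, vertBiv h v nc B l y * γ B y := by rw [Hγ l y]; ring
  have Yx_inl : ∀ (i : Fin h) (y : TotSp h v), ∑ B, π B (Sum.inl i) y * β B y = 0 := by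
    intro i y
    rw [Yx_vert]
    exact Finset.sum_eq_zero fun B _ => by rw [vertBiv_inl_right nc B i y, zero_mul]
  have Zx_inl : ∀ (i : Fin h) (y : TotSp h v), ∑ B, π B (Sum.inl i) y * γ B y = 0 := by
    intro i y
    rw [Zx_vert]
    exact Finset.sum_eq_zero fun B _ => by rw [vertBiv_inl_right nc B i y, zero_mul]
  -- derivative of the vertical components of α vanishes
  have pdα_inr : ∀ (a : Fin v) l, pdP h v (α (Sum.inr a)) l x = 0 := fun a l =>
    (pdP_congr (g := fun _ => 0) (hαhor a) l x).trans (pdP_zero l x)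
  -- expansion of the derivative of X
  have dXfact : ∀ l B, pdP h v (X B) l x
      = ∑ A, (π A B x * pdP h v (α A) l x + α A x * pdP h v (π A B) l x) := by
    intro l B
    conv_lhs => rw [hXf B]
    rw [pdP_sum Finset.univ (fun A => fun y => π A B y * α A y)
      (fun A _ => (dπ A B x).mul (dα A x)) l]
    exact Finset.sum_congr rfl fun A _ => pdP_mul (dπ A B x) (dα A x) l
  -- ## the three contracted derivative identities
  -- (Dβ)
  have Dβ : ∀ l, ∑ A, ∑ B, pdP h v (π A B) l x * α A x * β B x
      = ∑ B, β B x * pdP h v (X B) l x := by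
    intro l
    have corr : ∑ B, β B x * ∑ A, π A B x * pdP h v (α A) l x = 0 := by
      calc ∑ B, β B x * ∑ A, π A B x * pdP h v (α A) l x
          = ∑ B, ∑ A, pdP h v (α A) l x * (π A B x * β B x) := by
            refine Finset.sum_congr rfl fun B _ => ?_
            rw [Finset.mul_sum]
            exact Finset.sum_congr rfl fun A _ => by ring
        _ = ∑ A, ∑ B, pdP h v (α A) l x * (π A B x * β B x) := Finset.sum_comm
        _ = ∑ A, pdP h v (α A) l x * (-∑ B, π B A x * β B x) := by
            refine Finset.sum_congr rfl fun A _ => ?_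
            rw [← Finset.mul_sum]
            congr 1
            rw [← Finset.sum_neg_distrib]
            exact Finset.sum_congr rfl fun B _ => by rw [hskew A B x]; ring
        _ = 0 := by
            refine sum_split_zero _ _ (fun i => ?_) (fun a => pdα_inr a l)
            rw [Yx_inl i x]; ring
    calc ∑ A, ∑ B, pdP h v (π A B) l x * α A x * β B x
        = ∑ B, ∑ A, pdP h v (π A B) l x * α A x * β B x := Finset.sum_comm
      _ = ∑ B, β B x * ∑ A, α A x * pdP h v (π A B) l x := by
          refine Finset.sum_congr rfl fun B _ => ?_
          rw [Finset.mul_sum]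
          exact Finset.sum_congr rfl fun A _ => by ring
      _ = ∑ B, β B x * (pdP h v (X B) l x - ∑ A, π A B x * pdP h v (α A) l x) := by
          refine Finset.sum_congr rfl fun B _ => ?_
          rw [dXfact l B, Finset.sum_add_distrib]
          ring
      _ = (∑ B, β B x * pdP h v (X B) l x)
            - ∑ B, β B x * ∑ A, π A B x * pdP h v (α A) l x := by
          rw [← Finset.sum_sub_distrib]
          exact Finset.sum_congr rfl fun B _ => by ring
      _ = ∑ B, β B x * pdP h v (X B) l x := by rw [corr]; ring
  -- (Dγ)
  have Dγ : ∀ l, ∑ C, ∑ A, pdP h v (π C A) l x * γ C x * α A x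
      = -∑ C, γ C x * pdP h v (X C) l x := by
    intro l
    have key : ∀ C, ∑ A, (π C A x * pdP h v (α A) l x + α A x * pdP h v (π C A) l x)
        = -pdP h v (X C) l x := by
      intro C
      have e1 : pdP h v (fun y => ∑ A, π C A y * α A y) l x
          = ∑ A, (π C A x * pdP h v (α A) l x + α A x * pdP h v (π C A) l x) := by
        rw [pdP_sum Finset.univ (fun A => fun y => π C A y * α A y)
          (fun A _ => (dπ C A x).mul (dα A x)) l]
        exact Finset.sum_congr rfl fun A _ => pdP_mul (dπ C A x) (dα A x) l
      have e2 : pdP h v (fun y => ∑ A, π C A y * α A y) l x = -pdP h v (X C) l x := by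
        rw [pdP_congr (g := fun y => -X C y) (F2 C) l x]
        exact pdP_neg l x
      rw [← e1, e2]
    have corr : ∑ C, γ C x * ∑ A, π C A x * pdP h v (α A) l x = 0 := by
      calc ∑ C, γ C x * ∑ A, π C A x * pdP h v (α A) l x
          = ∑ C, ∑ A, pdP h v (α A) l x * (π C A x * γ C x) := by
            refine Finset.sum_congr rfl fun C _ => ?_
            rw [Finset.mul_sum]
            exact Finset.sum_congr rfl fun A _ => by ring
        _ = ∑ A, ∑ C, pdP h v (α A) l x * (π C A x * γ C x) := Finset.sum_comm
        _ = ∑ A, pdP h v (α A) l x * (∑ C, π C A x * γ C x) := by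
            refine Finset.sum_congr rfl fun A _ => ?_
            rw [Finset.mul_sum]
        _ = 0 := by
            refine sum_split_zero _ _ (fun i => Zx_inl i x) (fun a => pdα_inr a l)
    calc ∑ C, ∑ A, pdP h v (π C A) l x * γ C x * α A x
        = ∑ C, γ C x * ∑ A, α A x * pdP h v (π C A) l x := by
          refine Finset.sum_congr rfl fun C _ => ?_
          rw [Finset.mul_sum]
          exact Finset.sum_congr rfl fun A _ => by ring
      _ = ∑ C, γ C x * (-pdP h v (X C) l x - ∑ A, π C A x * pdP h v (α A) l x) := by
          refine Finset.sum_congr rfl fun C _ => ?_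
          rw [show ∑ A, α A x * pdP h v (π C A) l x
              = -pdP h v (X C) l x - ∑ A, π C A x * pdP h v (α A) l x by
            rw [← key C, Finset.sum_add_distrib]; ring]
      _ = (-∑ C, γ C x * pdP h v (X C) l x)
            - ∑ C, γ C x * ∑ A, π C A x * pdP h v (α A) l x := by
          rw [← Finset.sum_neg_distrib, ← Finset.sum_sub_distrib]
          exact Finset.sum_congr rfl fun C _ => by ring
      _ = -∑ C, γ C x * pdP h v (X C) l x := by rw [corr]; ring
  -- (Dν)
  have Dν : ∀ l, ∑ B, ∑ C, pdP h v (π B C) l x * β B x * γ C x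
      = ∑ B, ∑ C, pdP h v (vertBiv h v nc B C) l x * β B x * γ C x := by
    intro l
    have pdsplit : ∀ B C, pdP h v (π B C) l x
        = pdP h v (horBiv h v Γ m B C) l x + pdP h v (vertBiv h v nc B C) l x := by
      intro B C
      rw [pdP_congr (g := fun y => horBiv h v Γ m B C y + vertBiv h v nc B C y)
        (hπ B C) l x]
      exact pdP_add (dμ B C x) (dν B C x) l
    have G0 : ∀ (y : TotSp h v),
        ∑ B, ∑ C, horBiv h v Γ m B C y * β B y * γ C y = 0 := by
      intro y
      refine Finset.sum_eq_zero fun B _ => ?_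
      calc ∑ C, horBiv h v Γ m B C y * β B y * γ C y
          = β B y * ∑ C, horBiv h v Γ m B C y * γ C y := by
            rw [Finset.mul_sum]
            exact Finset.sum_congr rfl fun C _ => by ring
        _ = 0 := by rw [Hγr B y]; ring
    have pdG0 : pdP h v (fun y => ∑ B, ∑ C, horBiv h v Γ m B C y * β B y * γ C y) l x
        = 0 := by
      rw [pdP_congr (g := fun _ => 0) G0 l x]
      exact pdP_zero l x
    have pdG0' : ∑ B, ∑ C, (pdP h v (horBiv h v Γ m B C) l x * β B x * γ C x
        + horBiv h v Γ m B C x * pdP h v (β B) l x * γ C x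
        + horBiv h v Γ m B C x * β B x * pdP h v (γ C) l x) = 0 := by
      rw [← pdG0]
      rw [pdP_sum Finset.univ (fun B => fun y => ∑ C, horBiv h v Γ m B C y * β B y * γ C y)
        (fun B _ => DifferentiableAt.fun_sum fun C _ => ((dμ B C x).mul (dβ B x)).mul (dγ C x)) l]
      refine Finset.sum_congr rfl fun B _ => ?_
      rw [pdP_sum Finset.univ (fun C => fun y => horBiv h v Γ m B C y * β B y * γ C y)
        (fun C _ => ((dμ B C x).mul (dβ B x)).mul (dγ C x)) l]
      exact Finset.sum_congr rfl fun C _ =>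
        (pdP_mul3 (dμ B C x) (dβ B x) (dγ C x) l).symm
    have T2 : ∑ B, ∑ C, horBiv h v Γ m B C x * pdP h v (β B) l x * γ C x = 0 := by
      refine Finset.sum_eq_zero fun B _ => ?_
      calc ∑ C, horBiv h v Γ m B C x * pdP h v (β B) l x * γ C x
          = pdP h v (β B) l x * ∑ C, horBiv h v Γ m B C x * γ C x := by
            rw [Finset.mul_sum]
            exact Finset.sum_congr rfl fun C _ => by ring
        _ = 0 := by rw [Hγr B x]; ring
    have T3 : ∑ B, ∑ C, horBiv h v Γ m B C x * β B x * pdP h v (γ C) l x = 0 := by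
      rw [Finset.sum_comm]
      refine Finset.sum_eq_zero fun C _ => ?_
      calc ∑ B, horBiv h v Γ m B C x * β B x * pdP h v (γ C) l x
          = pdP h v (γ C) l x * ∑ B, horBiv h v Γ m B C x * β B x := by
            rw [Finset.mul_sum]
            exact Finset.sum_congr rfl fun B _ => by ring
        _ = 0 := by rw [Hβ C x]; ring
    have T1 : ∑ B, ∑ C, pdP h v (horBiv h v Γ m B C) l x * β B x * γ C x = 0 := by
      have expand : ∑ B, ∑ C, (pdP h v (horBiv h v Γ m B C) l x * β B x * γ C x
          + horBiv h v Γ m B C x * pdP h v (β B) l x * γ C x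
          + horBiv h v Γ m B C x * β B x * pdP h v (γ C) l x)
          = (∑ B, ∑ C, pdP h v (horBiv h v Γ m B C) l x * β B x * γ C x)
            + (∑ B, ∑ C, horBiv h v Γ m B C x * pdP h v (β B) l x * γ C x)
            + ∑ B, ∑ C, horBiv h v Γ m B C x * β B x * pdP h v (γ C) l x := by
        rw [← Finset.sum_add_distrib, ← Finset.sum_add_distrib]
        refine Finset.sum_congr rfl fun B _ => ?_
        rw [← Finset.sum_add_distrib, ← Finset.sum_add_distrib]
      have := pdG0'
      rw [expand, T2, T3] at this
      linarith
    calc ∑ B, ∑ C, pdP h v (π B C) l x * β B x * γ C x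
        = ∑ B, ∑ C, (pdP h v (horBiv h v Γ m B C) l x * β B x * γ C x
            + pdP h v (vertBiv h v nc B C) l x * β B x * γ C x) := by
          refine Finset.sum_congr rfl fun B _ => Finset.sum_congr rfl fun C _ => ?_
          rw [pdsplit B C]; ring
      _ = (∑ B, ∑ C, pdP h v (horBiv h v Γ m B C) l x * β B x * γ C x)
            + ∑ B, ∑ C, pdP h v (vertBiv h v nc B C) l x * β B x * γ C x := by
          rw [← Finset.sum_add_distrib]
          refine Finset.sum_congr rfl fun B _ => ?_
          rw [← Finset.sum_add_distrib]
      _ = ∑ B, ∑ C, pdP h v (vertBiv h v nc B C) l x * β B x * γ C x := by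
          rw [T1]; ring
  -- ## evaluations of the single contractions at x
  have E2 : ∀ l, ∑ B, π l B x * β B x = -∑ B, π B l x * β B x := by
    intro l
    rw [← Finset.sum_neg_distrib]
    exact Finset.sum_congr rfl fun B _ => by rw [hskew l B x]; ring
  have E3 : ∀ l, ∑ C, π l C x * γ C x = -∑ C, π C l x * γ C x := by
    intro l
    rw [← Finset.sum_neg_distrib]
    exact Finset.sum_congr rfl fun C _ => by rw [hskew l C x]; ring
  -- ## normalize the left-hand side
  have hS : ∑ A, ∑ B, ∑ C, schoutenP h v π A B C x * α A x * β B x * γ C x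
      = 2 * ∑ A, ∑ B, ∑ C, (∑ l, (π l A x * pdP h v (π B C) l x
          + π l B x * pdP h v (π C A) l x + π l C x * pdP h v (π A B) l x))
          * α A x * β B x * γ C x := by
    rw [Finset.mul_sum]
    refine Finset.sum_congr rfl fun A _ => ?_
    rw [Finset.mul_sum]
    refine Finset.sum_congr rfl fun B _ => ?_
    rw [Finset.mul_sum]
    refine Finset.sum_congr rfl fun C _ => ?_
    simp only [schoutenP]
    ring
  have hS2 : ∑ A, ∑ B, ∑ C, (∑ l, (π l A x * pdP h v (π B C) l x
          + π l B x * pdP h v (π C A) l x + π l C x * pdP h v (π A B) l x))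
          * α A x * β B x * γ C x
      = ∑ l, ∑ A, ∑ B, ∑ C, (π l A x * pdP h v (π B C) l x
          + π l B x * pdP h v (π C A) l x + π l C x * pdP h v (π A B) l x)
          * α A x * β B x * γ C x := by
    rw [← sum4_swap (fun A B C l => (π l A x * pdP h v (π B C) l x
          + π l B x * pdP h v (π C A) l x + π l C x * pdP h v (π A B) l x)
          * α A x * β B x * γ C x)]
    refine Finset.sum_congr rfl fun A _ => Finset.sum_congr rfl fun B _ =>
      Finset.sum_congr rfl fun C _ => ?_
    rw [Finset.sum_mul, Finset.sum_mul, Finset.sum_mul]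
  have hlterm : ∀ l, ∑ A, ∑ B, ∑ C, (π l A x * pdP h v (π B C) l x
          + π l B x * pdP h v (π C A) l x + π l C x * pdP h v (π A B) l x)
          * α A x * β B x * γ C x
      = -(X l x) * (∑ B, ∑ C, pdP h v (vertBiv h v nc B C) l x * β B x * γ C x)
        + (∑ B, π B l x * β B x) * (∑ C, γ C x * pdP h v (X C) l x)
        - (∑ C, π C l x * γ C x) * (∑ B, β B x * pdP h v (X B) l x) := by
    intro l
    have split : ∑ A, ∑ B, ∑ C, (π l A x * pdP h v (π B C) l x
          + π l B x * pdP h v (π C A) l x + π l C x * pdP h v (π A B) l x)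
          * α A x * β B x * γ C x
        = (∑ A, ∑ B, ∑ C, π l A x * pdP h v (π B C) l x * α A x * β B x * γ C x)
          + (∑ A, ∑ B, ∑ C, π l B x * pdP h v (π C A) l x * α A x * β B x * γ C x)
          + ∑ A, ∑ B, ∑ C, π l C x * pdP h v (π A B) l x * α A x * β B x * γ C x := by
      rw [← Finset.sum_add_distrib, ← Finset.sum_add_distrib]
      refine Finset.sum_congr rfl fun A _ => ?_
      rw [← Finset.sum_add_distrib, ← Finset.sum_add_distrib]
      refine Finset.sum_congr rfl fun B _ => ?_
      rw [← Finset.sum_add_distrib, ← Finset.sum_add_distrib]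
      exact Finset.sum_congr rfl fun C _ => by ring
    rw [split]
    rw [fact1 (fun A => π l A x) (fun B C => pdP h v (π B C) l x) (fun A => α A x)
      (fun B => β B x) (fun C => γ C x)]
    rw [fact2 (fun B => π l B x) (fun C A => pdP h v (π C A) l x) (fun A => α A x)
      (fun B => β B x) (fun C => γ C x)]
    rw [fact3 (fun C => π l C x) (fun A B => pdP h v (π A B) l x) (fun A => α A x)
      (fun B => β B x) (fun C => γ C x)]
    rw [F2 l x, Dν l, E2 l, Dγ l, E3 l, Dβ l]
    ring
  -- ## normalize the right-hand side
  have hR : ∑ A, ∑ B, lieBiv h v X (vertBiv h v nc) A B x * β A x * γ B x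
      = ∑ l, (X l x * (∑ B, ∑ C, pdP h v (vertBiv h v nc B C) l x * β B x * γ C x)
        - (∑ B, π B l x * β B x) * (∑ C, γ C x * pdP h v (X C) l x)
        + (∑ C, π C l x * γ C x) * (∑ B, β B x * pdP h v (X B) l x)) := by
    have step1 : ∑ A, ∑ B, lieBiv h v X (vertBiv h v nc) A B x * β A x * γ B x
        = ∑ A, ∑ B, ∑ C, (X C x * pdP h v (vertBiv h v nc A B) C x
            - vertBiv h v nc C B x * pdP h v (X A) C x
            - vertBiv h v nc A C x * pdP h v (X B) C x) * β A x * γ B x := by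
      refine Finset.sum_congr rfl fun A _ => Finset.sum_congr rfl fun B _ => ?_
      show lieBiv h v X (vertBiv h v nc) A B x * β A x * γ B x = _
      simp only [lieBiv]
      rw [Finset.sum_mul, Finset.sum_mul]
    rw [step1]
    have step2 : ∑ A, ∑ B, ∑ C, (X C x * pdP h v (vertBiv h v nc A B) C x
            - vertBiv h v nc C B x * pdP h v (X A) C x
            - vertBiv h v nc A C x * pdP h v (X B) C x) * β A x * γ B x
        = ∑ C, ∑ A, ∑ B, (X C x * pdP h v (vertBiv h v nc A B) C x
            - vertBiv h v nc C B x * pdP h v (X A) C x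
            - vertBiv h v nc A C x * pdP h v (X B) C x) * β A x * γ B x := by
      rw [sum_rot3, sum_rot3]
    rw [step2]
    refine Finset.sum_congr rfl fun l _ => ?_
    have split : ∑ A, ∑ B, (X l x * pdP h v (vertBiv h v nc A B) l x
            - vertBiv h v nc l B x * pdP h v (X A) l x
            - vertBiv h v nc A l x * pdP h v (X B) l x) * β A x * γ B x
        = (∑ A, ∑ B, X l x * (pdP h v (vertBiv h v nc A B) l x * β A x * γ B x))
          - (∑ A, ∑ B, (pdP h v (X A) l x * β A x) * (vertBiv h v nc l B x * γ B x))
          - ∑ A, ∑ B, (vertBiv h v nc A l x * β A x) * (pdP h v (X B) l x * γ B x) := by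
      rw [← Finset.sum_sub_distrib, ← Finset.sum_sub_distrib]
      refine Finset.sum_congr rfl fun A _ => ?_
      rw [← Finset.sum_sub_distrib, ← Finset.sum_sub_distrib]
      exact Finset.sum_congr rfl fun B _ => by ring
    rw [split]
    have inner : ∑ A, ∑ B, X l x * (pdP h v (vertBiv h v nc A B) l x * β A x * γ B x)
        = X l x * ∑ B, ∑ C, pdP h v (vertBiv h v nc B C) l x * β B x * γ C x := by
      rw [Finset.mul_sum]
      refine Finset.sum_congr rfl fun A _ => ?_
      rw [Finset.mul_sum]
    rw [inner]
    rw [sep2 (fun A => pdP h v (X A) l x * β A x) (fun B => vertBiv h v nc l B x * γ B x)]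
    rw [sep2 (fun A => vertBiv h v nc A l x * β A x) (fun B => pdP h v (X B) l x * γ B x)]
    have ev1 : ∑ B, vertBiv h v nc l B x * γ B x = -∑ C, π C l x * γ C x := by
      rw [Zx_vert l x, ← Finset.sum_neg_distrib]
      exact Finset.sum_congr rfl fun B _ => by
        rw [vertBiv_skew nc hncskew l B x]; ring
    have ev2 : ∑ A, vertBiv h v nc A l x * β A x = ∑ B, π B l x * β B x := by
      rw [Yx_vert l x]
    have ev3 : ∀ (δ : Fin h ⊕ Fin v → TotSp h v → ℝ),
        ∑ A, pdP h v (X A) l x * δ A x = ∑ A, δ A x * pdP h v (X A) l x :=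
      fun δ => Finset.sum_congr rfl fun A _ => by ring
    rw [ev1, ev2, ev3 β, ev3 γ]
    ring
  -- ## put everything together
  rw [hS, hS2, hR]
  rw [Finset.sum_congr rfl fun l _ => hlterm l]
  have final : ∀ (S : ℝ), -(1/2 : ℝ) * (2 * S) = -S := fun S => by ring
  rw [final]
  rw [← Finset.sum_neg_distrib]
  exact Finset.sum_congr rfl fun l _ => by ring
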